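/- Let f : ℝⁿ → ℝ be convex, differentiable, and μ-smooth, A an n×d matrix, λ > 0, and S a d×m matrix. Let x* be the minimizer of F(x) = f(Ax) + (λ/2)‖x‖², with dual solution z* = ∇f(Ax*). Let α* minimize α ↦ f(ASα) + (λ/2)‖Sα‖², and define the zero-order estimator x̂⁰ = Sα* and the first-order estimator x̂¹ = -(1/λ)Aᵀ∇f(ASα*). Let Z_f = sup{‖P_S^⊥ Aᵀ Δ‖ : Δ ∈ T_{z*} ∩ B₂ⁿ}, where T_{z*} is the tangent cone of dom f* at z* and P_S^⊥ = I - P_S. If λ ≥ 2μ Z_f², then ‖x̂¹ - x*‖ / ‖x*‖ ≤ √(μ/(2λ)) · Z_f · min{1, ‖x̂⁰ - x*‖ / ‖x*‖} (assuming x* ≠ 0). -/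

import Mathlib

open scoped RealInnerProductSpace
open Matrix MeasureTheory ProbabilityTheory

noncomputable section

abbrev EuclR (n : ℕ) := EuclideanSpace ℝ (Fin n)

def matVec {p q : ℕ} (M : Matrix (Fin p) (Fin q) ℝ) (x : EuclR q) : EuclR p :=
  Matrix.toEuclideanLin M x

def matCLM {p q : ℕ} (M : Matrix (Fin p) (Fin q) ℝ) : EuclR q →L[ℝ] EuclR p :=
  LinearMap.toContinuousLinearMap (Matrix.toEuclideanLin M)

def ranM {p q : ℕ} (M : Matrix (Fin p) (Fin q) ℝ) : Submodule ℝ (EuclR p) :=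
  LinearMap.range (Matrix.toEuclideanLin M)

def projOn {p : ℕ} (K : Submodule ℝ (EuclR p)) (x : EuclR p) : EuclR p :=
  (K.orthogonalProjectionOnto x : EuclR p)

def perpCLM {p : ℕ} (K : Submodule ℝ (EuclR p)) : EuclR p →L[ℝ] EuclR p :=
  ContinuousLinearMap.id ℝ (EuclR p) - K.subtypeL.comp (K.orthogonalProjectionOnto)

def fconj {p : ℕ} (f : EuclR p → ℝ) (z : EuclR p) : EReal :=
  ⨆ w : EuclR p, ((⟪w, z⟫ - f w : ℝ) : EReal)

def fdom {p : ℕ} (f : EuclR p → ℝ) : Set (EuclR p) := {z | fconj f z ≠ ⊤}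

def tcone {p : ℕ} (f : EuclR p → ℝ) (z : EuclR p) : Set (EuclR p) :=
  {Δ | ∃ t : ℝ, 0 ≤ t ∧ ∃ y ∈ fdom f, Δ = t • (y - z)}

def ZfVal {n d m : ℕ} (f : EuclR n → ℝ) (zs : EuclR n)
    (A : Matrix (Fin n) (Fin d) ℝ) (S : Matrix (Fin d) (Fin m) ℝ) : ℝ :=
  sSup ((fun Δ => ‖matVec Aᵀ Δ - projOn (ranM S) (matVec Aᵀ Δ)‖) ''
    (tcone f zs ∩ Metric.closedBall 0 1))

/-!
The optimality conditions give `Aᵀ z* = -λ x*` and `Aᵀ y* + λ x̂⁰ ⊥ range S`, where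
`y* = ∇f(A S α*)`; so `a := Aᵀ (y* - z*) = λ (x* - x̂¹)` has component `-λ P_S (x̂⁰ - x*)` in
`range S`, while its component orthogonal to `range S` has norm at most `Z_f ‖y* - z*‖`
because `y* ∈ dom f*`. Cocoercivity of `∇f`, `‖y* - z*‖² / μ ≤ ⟪a, x̂⁰ - x*⟫`, plays the two
components against each other, and once `λ ≥ 2 μ Z_f²` completing the square yields
`‖a‖² ≤ λ μ Z_f² min (‖x*‖, ‖x̂⁰ - x*‖)² / 2`.
-/

section Gradient

variable {E : Type*} [NormedAddCommGroup E] [InnerProductSpace ℝ E] [CompleteSpace E]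
  {f : E → ℝ} {g : E → E}

theorem hasDerivAt_comp_add_smul (hg : ∀ x, HasGradientAt f (g x) x) (x v : E) (t : ℝ) :
    HasDerivAt (fun s : ℝ => f (x + s • v)) ⟪g (x + t • v), v⟫ t := by
  have hline : HasDerivAt (fun s : ℝ => x + s • v) v t := by
    simpa using ((hasDerivAt_id t).smul_const v).const_add x
  simpa [Function.comp_def] using (hg (x + t • v)).hasFDerivAt.comp_hasDerivAt t hline

theorem ConvexOn.add_inner_gradient_le (hconv : ConvexOn ℝ Set.univ f)
    (hg : ∀ x, HasGradientAt f (g x) x) (x y : E) : f x + ⟪g x, y - x⟫ ≤ f y := by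
  have hline : ConvexOn ℝ Set.univ fun s : ℝ => f (x + s • (y - x)) := by
    simpa [Function.comp_def] using
      (hconv.translate_right x).comp_linearMap (LinearMap.toSpanSingleton ℝ E (y - x))
  have := hline.le_slope_of_hasDerivAt (Set.mem_univ 0) (Set.mem_univ 1) zero_lt_one
    (by simpa using hasDerivAt_comp_add_smul hg x (y - x) 0)
  simp only [slope_def_field, one_smul, zero_smul, add_zero, add_sub_cancel, sub_zero,
    div_one] at this
  linarith

theorem le_add_inner_gradient_add_sq (hg : ∀ x, HasGradientAt f (g x) x) {μ : ℝ}
    (hsmooth : ∀ x y, ‖g y - g x‖ ≤ μ * ‖y - x‖) (x y : E) :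
    f y ≤ f x + ⟪g x, y - x⟫ + μ / 2 * ‖y - x‖ ^ 2 := by
  set v := y - x
  have hderiv : ∀ t : ℝ,
      HasDerivAt (fun s => f (x + s • v) - s * ⟪g x, v⟫ - μ / 2 * ‖v‖ ^ 2 * s ^ 2)
        (⟪g (x + t • v) - g x, v⟫ - μ * ‖v‖ ^ 2 * t) t := by
    intro t
    refine (((hasDerivAt_comp_add_smul hg x v t).sub ((hasDerivAt_id t).mul_const ⟪g x, v⟫)).sub
      ((hasDerivAt_pow 2 t).const_mul (μ / 2 * ‖v‖ ^ 2))).congr_deriv ?_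
    rw [inner_sub_left]
    push_cast
    ring
  have hanti := antitoneOn_of_hasDerivWithinAt_nonpos (convex_Ici 0)
    (fun t _ => (hderiv t).continuousAt.continuousWithinAt)
    (fun t _ => (hderiv t).hasDerivWithinAt)
    (fun t ht => by
      rw [interior_Ici, Set.mem_Ioi] at ht
      calc ⟪g (x + t • v) - g x, v⟫ - μ * ‖v‖ ^ 2 * t
          ≤ ‖g (x + t • v) - g x‖ * ‖v‖ - μ * ‖v‖ ^ 2 * t := by
            gcongr; exact real_inner_le_norm _ _
        _ ≤ μ * ‖t • v‖ * ‖v‖ - μ * ‖v‖ ^ 2 * t := by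
            gcongr; simpa using hsmooth x (x + t • v)
        _ = 0 := by rw [norm_smul, Real.norm_of_nonneg ht.le]; ring)
  have := hanti Set.self_mem_Ici (Set.mem_Ici.2 zero_le_one) zero_le_one
  simp only [one_smul, zero_smul, add_zero, one_mul, one_pow, mul_one, zero_mul, sub_zero,
    ne_eq, OfNat.ofNat_ne_zero, not_false_eq_true, zero_pow, mul_zero, v, add_sub_cancel] at this
  linarith

theorem ConvexOn.sq_norm_sub_gradient_le (hconv : ConvexOn ℝ Set.univ f)
    (hg : ∀ x, HasGradientAt f (g x) x) {μ : ℝ} (hμ : 0 < μ)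
    (hsmooth : ∀ x y, ‖g y - g x‖ ≤ μ * ‖y - x‖) (x y : E) :
    ‖g y - g x‖ ^ 2 / (2 * μ) ≤ f y - f x - ⟪g x, y - x⟫ := by
  set D := g y - g x
  -- bound `f` at the gradient step `w` from above (descent at `y`) and below (convexity at `x`)
  set w := y - μ⁻¹ • D
  have hdescent := le_add_inner_gradient_add_sq hg hsmooth y w
  have hconvex := hconv.add_inner_gradient_le hg x w
  have hwy : w - y = -(μ⁻¹ • D) := sub_sub_cancel_left y _
  have hwx : w - x = (y - x) - μ⁻¹ • D := sub_right_comm y _ x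
  rw [hwy, norm_neg, norm_smul, inner_neg_right, real_inner_smul_right] at hdescent
  rw [hwx, inner_sub_right, real_inner_smul_right] at hconvex
  have hD : ⟪g y, D⟫ - ⟪g x, D⟫ = ‖D‖ ^ 2 := by
    rw [← inner_sub_left, real_inner_self_eq_norm_sq]
  rw [Real.norm_of_nonneg (inv_nonneg.2 hμ.le)] at hdescent
  field_simp at hdescent hconvex ⊢
  nlinarith

theorem ConvexOn.sq_norm_sub_gradient_le_inner (hconv : ConvexOn ℝ Set.univ f)
    (hg : ∀ x, HasGradientAt f (g x) x) {μ : ℝ} (hμ : 0 < μ)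
    (hsmooth : ∀ x y, ‖g y - g x‖ ≤ μ * ‖y - x‖) (x y : E) :
    ‖g y - g x‖ ^ 2 / μ ≤ ⟪g y - g x, y - x⟫ := by
  have hxy := hconv.sq_norm_sub_gradient_le hg hμ hsmooth x y
  have hyx := hconv.sq_norm_sub_gradient_le hg hμ hsmooth y x
  rw [norm_sub_rev] at hyx
  rw [inner_sub_left]
  rw [← neg_sub y x, inner_neg_right] at hyx
  have : ‖g y - g x‖ ^ 2 / μ = ‖g y - g x‖ ^ 2 / (2 * μ) + ‖g y - g x‖ ^ 2 / (2 * μ) := by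
    field_simp; ring
  linarith

end Gradient

section Stationarity

variable {E F G : Type*} [AddCommGroup E] [Module ℝ E]
  [NormedAddCommGroup F] [InnerProductSpace ℝ F] [CompleteSpace F]
  [NormedAddCommGroup G] [InnerProductSpace ℝ G]

theorem inner_gradient_add_inner_eq_zero_of_forall_le {f : F → ℝ} {g : F → F}
    (hg : ∀ x, HasGradientAt f (g x) x) (M : E →ₗ[ℝ] F) (P : E →ₗ[ℝ] G) {lam : ℝ} {x₀ : E}
    (hmin : ∀ x, f (M x₀) + lam / 2 * ‖P x₀‖ ^ 2 ≤ f (M x) + lam / 2 * ‖P x‖ ^ 2) (v : E) :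
    ⟪g (M x₀), M v⟫ + lam * ⟪P x₀, P v⟫ = 0 := by
  have hderiv : HasDerivAt (fun s : ℝ => f (M x₀ + s • M v) + lam / 2 * ‖P x₀ + s • P v‖ ^ 2)
      (⟪g (M x₀), M v⟫ + lam * ⟪P x₀, P v⟫) 0 := by
    have hline : HasDerivAt (fun s : ℝ => P x₀ + s • P v) (P v) 0 := by
      simpa using ((hasDerivAt_id (0 : ℝ)).smul_const (P v)).const_add (P x₀)
    refine ((hasDerivAt_comp_add_smul hg (M x₀) (M v) 0).add
      (hline.norm_sq.const_mul (lam / 2))).congr_deriv ?_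
    simp only [zero_smul, add_zero]
    ring
  refine IsLocalMin.hasDerivAt_eq_zero (Filter.Eventually.of_forall fun s => ?_) hderiv
  simpa using hmin (x₀ + s • v)

end Stationarity

theorem norm_apply_le_sSup_mul_norm {E F : Type*} [NormedAddCommGroup E] [NormedSpace ℝ E]
    [NormedAddCommGroup F] [NormedSpace ℝ F] (T : E →L[ℝ] F) {C : Set E}
    (hC : ∀ c : ℝ, 0 ≤ c → ∀ x ∈ C, c • x ∈ C) {x : E} (hx : x ∈ C) :
    ‖T x‖ ≤ sSup ((fun y => ‖T y‖) '' (C ∩ Metric.closedBall 0 1)) * ‖x‖ := by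
  rcases eq_or_ne x 0 with rfl | hx0
  · simp
  have hnorm : 0 < ‖x‖ := norm_pos_iff.2 hx0
  have hbdd : BddAbove ((fun y => ‖T y‖) '' (C ∩ Metric.closedBall 0 1)) := by
    refine ⟨‖T‖, ?_⟩
    rintro _ ⟨y, ⟨-, hy⟩, rfl⟩
    rw [mem_closedBall_zero_iff] at hy
    exact T.le_of_opNorm_le_of_le le_rfl hy |>.trans (by simp)
  have hunit : ‖x‖⁻¹ • x ∈ C ∩ Metric.closedBall 0 1 :=
    ⟨hC _ (inv_nonneg.2 hnorm.le) x hx, by simp [norm_smul, hnorm.ne']⟩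
  have : ‖T (‖x‖⁻¹ • x)‖ ≤ _ := le_csSup hbdd ⟨_, hunit, rfl⟩
  rwa [map_smul, norm_smul, norm_inv, norm_norm, inv_mul_le_iff₀ hnorm, mul_comm] at this

theorem div_le_mul_min_one_div {a b c C : ℝ} (hb : 0 ≤ b) (h : a ≤ C * min b c) :
    a / b ≤ C * min 1 (c / b) := by
  rcases hb.eq_or_lt with rfl | hb
  · simp
  rw [← div_self hb.ne', min_div_div_right hb.le, ← mul_div_assoc]
  exact div_le_div_of_nonneg_right h hb.le

section Projection

variable {E : Type*} [NormedAddCommGroup E] [InnerProductSpace ℝ E]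
  (K : Submodule ℝ E) [K.HasOrthogonalProjection]

theorem inner_eq_inner_starProjection_add_inner_starProjection_orthogonal (a y : E) :
    ⟪a, y⟫ = ⟪K.starProjection a, K.starProjection y⟫
      + ⟪Kᗮ.starProjection a, Kᗮ.starProjection y⟫ := by
  conv_lhs => rw [← K.starProjection_add_starProjection_orthogonal a,
    ← K.starProjection_add_starProjection_orthogonal y]
  simp only [inner_add_left, inner_add_right]
  rw [Submodule.inner_right_of_mem_orthogonal (K.starProjection_apply_mem a)
      (Kᗮ.starProjection_apply_mem y),
    Submodule.inner_left_of_mem_orthogonal (K.starProjection_apply_mem y)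
      (Kᗮ.starProjection_apply_mem a)]
  ring

theorem norm_div_le_sqrt_mul_min {a x₀ x : E} {μ lam Z s : ℝ} (hμ : 0 < μ) (hlam : 0 < lam)
    (hZ : 0 ≤ Z) (hcond : 2 * μ * Z ^ 2 ≤ lam) (hx₀ : x₀ ∈ K) (horth : a + lam • (x₀ - x) ∈ Kᗮ)
    (hco : s ^ 2 / μ ≤ ⟪a, x₀ - x⟫) (hperp : ‖Kᗮ.starProjection a‖ ≤ Z * s) :
    ‖a‖ / lam ≤ √(μ / (2 * lam)) * Z * min ‖x‖ ‖x₀ - x‖ := by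
  set u := K.starProjection (x₀ - x)
  set m := min ‖x‖ ‖x₀ - x‖
  set q := ‖Kᗮ.starProjection a‖
  have hPa : K.starProjection a = -(lam • u) := by
    have := K.starProjection_apply_eq_zero_iff.2 horth
    rw [map_add, map_smul] at this
    exact eq_neg_of_add_eq_zero_left this
  have hr : ‖Kᗮ.starProjection (x₀ - x)‖ ≤ m := by
    refine le_min ?_ (Kᗮ.norm_starProjection_apply_le _)
    have : Kᗮ.starProjection x₀ = 0 :=
      Kᗮ.starProjection_apply_eq_zero_iff.2 (K.le_orthogonal_orthogonal hx₀)
    rw [map_sub, this, zero_sub, norm_neg]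
    exact Kᗮ.norm_starProjection_apply_le x
  have hkey : s ^ 2 / μ ≤ -(lam * ‖u‖ ^ 2) + q * m := by
    have hcross := real_inner_le_norm (Kᗮ.starProjection a) (Kᗮ.starProjection (x₀ - x))
    rw [inner_eq_inner_starProjection_add_inner_starProjection_orthogonal K, hPa, inner_neg_left,
      real_inner_smul_left, real_inner_self_eq_norm_sq] at hco
    nlinarith [mul_le_mul_of_nonneg_left hr (norm_nonneg (Kᗮ.starProjection a))]
  have hpyth : ‖a‖ ^ 2 = lam ^ 2 * ‖u‖ ^ 2 + q ^ 2 := by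
    rw [K.norm_sq_eq_add_norm_sq_starProjection a, hPa, norm_neg, norm_smul,
      Real.norm_of_nonneg hlam.le, mul_pow]
  have hm : 0 ≤ m := le_min (norm_nonneg _) (norm_nonneg _)
  have hq : 0 ≤ q := norm_nonneg _
  have hsq : (‖a‖ / lam) ^ 2 ≤ (√(μ / (2 * lam)) * Z * m) ^ 2 := by
    rw [mul_pow, mul_pow, Real.sq_sqrt (by positivity), div_pow, hpyth,
      div_le_iff₀ (by positivity)]
    rw [div_le_iff₀ hμ] at hkey
    have hq2 : q ^ 2 ≤ Z ^ 2 * s ^ 2 := by nlinarith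
    have hqm : q * m ≤ Z * s * m := mul_le_mul_of_nonneg_right hperp hm
    field_simp
    nlinarith [mul_le_mul_of_nonneg_left hkey hlam.le,
      mul_le_mul_of_nonneg_right hcond (sq_nonneg s), sq_nonneg (μ * Z * m - s),
      mul_le_mul_of_nonneg_left hqm hlam.le]
  exact (pow_le_pow_iff_left₀ (by positivity) (by positivity) two_ne_zero).1 hsq

end Projection

section Euclidean

theorem matVec_sub {p q : ℕ} (M : Matrix (Fin p) (Fin q) ℝ) (x y : EuclR q) :
    matVec M (x - y) = matVec M x - matVec M y :=
  map_sub (Matrix.toEuclideanLin M) x y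

theorem matVec_mul {n d m : ℕ} (A : Matrix (Fin n) (Fin d) ℝ) (S : Matrix (Fin d) (Fin m) ℝ)
    (x : EuclR m) : matVec (A * S) x = matVec A (matVec S x) := by
  simp [matVec, Matrix.toLpLin_apply, Matrix.mulVec_mulVec]

theorem matVec_adjoint {p q : ℕ} (M : Matrix (Fin p) (Fin q) ℝ) (u : EuclR p) (v : EuclR q) :
    ⟪matVec Mᵀ u, v⟫ = ⟪u, matVec M v⟫ := by
  rw [matVec, matVec, ← Matrix.conjTranspose_eq_transpose_of_trivial,
    Matrix.toEuclideanLin_conjTranspose_eq_adjoint, LinearMap.adjoint_inner_left]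

variable {n d m : ℕ} {f : EuclR n → ℝ} {g : EuclR n → EuclR n}

theorem gradient_mem_fdom (hconv : ConvexOn ℝ Set.univ f) (hg : ∀ x, HasGradientAt f (g x) x)
    (x : EuclR n) : g x ∈ fdom f := by
  refine ne_top_of_le_ne_top (EReal.coe_ne_top (⟪x, g x⟫ - f x)) (iSup_le fun w => ?_)
  have := hconv.add_inner_gradient_le hg x w
  rw [EReal.coe_le_coe_iff]
  rw [inner_sub_right] at this
  linarith [real_inner_comm (g x) w, real_inner_comm (g x) x]

theorem matVec_transpose_gradient_add_smul_eq_zero (hg : ∀ x, HasGradientAt f (g x) x)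
    (A : Matrix (Fin n) (Fin d) ℝ) {lam : ℝ} {x₀ : EuclR d}
    (hmin : ∀ x, f (matVec A x₀) + lam / 2 * ‖x₀‖ ^ 2 ≤ f (matVec A x) + lam / 2 * ‖x‖ ^ 2) :
    matVec Aᵀ (g (matVec A x₀)) + lam • x₀ = 0 := by
  refine ext_inner_right ℝ fun v => ?_
  rw [inner_add_left, matVec_adjoint, real_inner_smul_left, inner_zero_left]
  exact inner_gradient_add_inner_eq_zero_of_forall_le hg (Matrix.toEuclideanLin A) LinearMap.id
    hmin v

theorem matVec_transpose_gradient_add_smul_mem_orthogonal (hg : ∀ x, HasGradientAt f (g x) x)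
    (A : Matrix (Fin n) (Fin d) ℝ) (S : Matrix (Fin d) (Fin m) ℝ) {lam : ℝ} {α₀ : EuclR m}
    (hmin : ∀ α, f (matVec (A * S) α₀) + lam / 2 * ‖matVec S α₀‖ ^ 2
        ≤ f (matVec (A * S) α) + lam / 2 * ‖matVec S α‖ ^ 2) :
    matVec Aᵀ (g (matVec (A * S) α₀)) + lam • matVec S α₀ ∈ (ranM S)ᗮ := by
  rw [Submodule.mem_orthogonal']
  rintro _ ⟨α, rfl⟩
  change ⟪_, matVec S α⟫ = 0
  rw [inner_add_left, matVec_adjoint, ← matVec_mul, real_inner_smul_left]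
  exact inner_gradient_add_inner_eq_zero_of_forall_le hg (Matrix.toEuclideanLin (A * S))
    (Matrix.toEuclideanLin S) hmin α

theorem ZfVal_nonneg (f : EuclR n → ℝ) (zs : EuclR n) (A : Matrix (Fin n) (Fin d) ℝ)
    (S : Matrix (Fin d) (Fin m) ℝ) : 0 ≤ ZfVal f zs A S :=
  Real.sSup_nonneg (by rintro _ ⟨_, _, rfl⟩; positivity)

theorem norm_starProjection_orthogonal_le_ZfVal_mul {zs y : EuclR n}
    (A : Matrix (Fin n) (Fin d) ℝ) (S : Matrix (Fin d) (Fin m) ℝ) (hy : y ∈ fdom f) :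
    ‖(ranM S)ᗮ.starProjection (matVec Aᵀ (y - zs))‖ ≤ ZfVal f zs A S * ‖y - zs‖ := by
  have hcone : ∀ c : ℝ, 0 ≤ c → ∀ Δ ∈ tcone f zs, c • Δ ∈ tcone f zs := by
    rintro c hc _ ⟨t, ht, y, hy, rfl⟩
    exact ⟨c * t, mul_nonneg hc ht, y, hy, smul_smul c t _⟩
  rw [Submodule.starProjection_orthogonal_val]
  exact norm_apply_le_sSup_mul_norm (perpCLM (ranM S) ∘L matCLM Aᵀ) hcone
    ⟨1, zero_le_one, y, hy, (one_smul ℝ _).symm⟩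

end Euclidean

theorem first_order_recovery_general (n d m : ℕ) (f : EuclR n → ℝ) (μ lam : ℝ)
    (hμ : 0 < μ) (hlam : 0 < lam)
    (hconv : ConvexOn ℝ Set.univ f)
    (hdiff : ∀ x, HasGradientAt f (gradient f x) x)
    (hsmooth : ∀ x y, ‖gradient f y - gradient f x‖ ≤ μ * ‖y - x‖)
    (A : Matrix (Fin n) (Fin d) ℝ) (S : Matrix (Fin d) (Fin m) ℝ)
    (xs : EuclR d)
    (hxs : ∀ x, f (matVec A xs) + lam / 2 * ‖xs‖ ^ 2 ≤ f (matVec A x) + lam / 2 * ‖x‖ ^ 2)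
    (zs : EuclR n) (hzs : zs = gradient f (matVec A xs))
    (αs : EuclR m)
    (hαs : ∀ α, f (matVec (A * S) αs) + lam / 2 * ‖matVec S αs‖ ^ 2
        ≤ f (matVec (A * S) α) + lam / 2 * ‖matVec S α‖ ^ 2)
    (x0 x1 : EuclR d)
    (hx0 : x0 = matVec S αs)
    (hx1 : x1 = (-(1 / lam)) • matVec Aᵀ (gradient f (matVec (A * S) αs)))
    (hcond : 2 * μ * (ZfVal f zs A S) ^ 2 ≤ lam) :
    ‖x1 - xs‖ / ‖xs‖
      ≤ Real.sqrt (μ / (2 * lam)) * ZfVal f zs A S * min 1 (‖x0 - xs‖ / ‖xs‖) := by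
  set ys := gradient f (matVec (A * S) αs)
  have hopt : matVec Aᵀ zs = -(lam • xs) := by
    rw [hzs]
    exact eq_neg_of_add_eq_zero_left (matVec_transpose_gradient_add_smul_eq_zero hdiff A hxs)
  set a := matVec Aᵀ (ys - zs) with ha
  have ha' : a = matVec Aᵀ ys + lam • xs := by rw [ha, matVec_sub, hopt, sub_neg_eq_add]
  have horth : a + lam • (x0 - xs) ∈ (ranM S)ᗮ := by
    convert matVec_transpose_gradient_add_smul_mem_orthogonal hdiff A S hαs using 1
    rw [ha', hx0]
    module
  have hco : ‖ys - zs‖ ^ 2 / μ ≤ ⟪a, x0 - xs⟫ := by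
    rw [ha, matVec_adjoint, matVec_sub, hx0, ← matVec_mul, hzs]
    exact hconv.sq_norm_sub_gradient_le_inner hdiff hμ hsmooth _ _
  have hperp : ‖(ranM S)ᗮ.starProjection a‖ ≤ ZfVal f zs A S * ‖ys - zs‖ :=
    norm_starProjection_orthogonal_le_ZfVal_mul A S (gradient_mem_fdom hconv hdiff _)
  have herr : ‖x1 - xs‖ = ‖a‖ / lam := by
    have : x1 - xs = (-(1 / lam)) • a := by
      rw [hx1, ha', smul_add, smul_smul]
      field_simp
      module
    rw [this, norm_smul, norm_neg, Real.norm_of_nonneg (by positivity)]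
    ring
  refine div_le_mul_min_one_div (norm_nonneg xs) ?_
  rw [herr]
  exact norm_div_le_sqrt_mul_min (ranM S) hμ hlam (ZfVal_nonneg f zs A S) hcond ⟨αs, hx0.symm⟩
    horth hco hperp

/-- recovery error of the first-order estimator (Theorem 1 of the paper). -/
theorem first_order_recovery (n d m : ℕ) (f : EuclR n → ℝ) (μ lam : ℝ)
    (hμ : 0 < μ) (hlam : 0 < lam)
    (hconv : ConvexOn ℝ Set.univ f)
    (hdiff : ∀ x, HasGradientAt f (gradient f x) x)
    (hsmooth : ∀ x y, ‖gradient f y - gradient f x‖ ≤ μ * ‖y - x‖)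
    (A : Matrix (Fin n) (Fin d) ℝ) (S : Matrix (Fin d) (Fin m) ℝ)
    (xs : EuclR d) (hxs0 : xs ≠ 0)
    (hxs : ∀ x, f (matVec A xs) + lam / 2 * ‖xs‖ ^ 2 ≤ f (matVec A x) + lam / 2 * ‖x‖ ^ 2)
    (zs : EuclR n) (hzs : zs = gradient f (matVec A xs))
    (αs : EuclR m)
    (hαs : ∀ α, f (matVec (A * S) αs) + lam / 2 * ‖matVec S αs‖ ^ 2
        ≤ f (matVec (A * S) α) + lam / 2 * ‖matVec S α‖ ^ 2)
    (x0 x1 : EuclR d)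
    (hx0 : x0 = matVec S αs)
    (hx1 : x1 = (-(1 / lam)) • matVec Aᵀ (gradient f (matVec (A * S) αs)))
    (hcond : 2 * μ * (ZfVal f zs A S) ^ 2 ≤ lam) :
    ‖x1 - xs‖ / ‖xs‖
      ≤ Real.sqrt (μ / (2 * lam)) * ZfVal f zs A S * min 1 (‖x0 - xs‖ / ‖xs‖) :=
  first_order_recovery_general n d m f μ lam hμ hlam hconv hdiff hsmooth A S xs hxs zs hzs αs hαs x0
    x1 hx0 hx1 hcond
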